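/- (Successor-witness characterization.) Let S ⊆ V and let Ã^{(S)} denote Ã with all columns outside S replaced by zero (i.e., Ã^{(S)} i s = Ã i s if s ∈ S and 0 otherwise). Let i, j ∈ V with j reachable from i and d := dist_G(i,j) ≥ 1. Then the coefficient of u^{d−1} in the (i,j) entry of the matrix product Ã^{(S)} * adj(1 − u·Ã) (over R[u]) is nonzero if and only if there exists s ∈ S with (i,s) ∈ E and dist_G(s,j) = d − 1, i.e., iff S contains a successor of i on a shortest path from i to j. In particular, taking S = V, the least degree of u occurring in the (i,j) entry of Ã * adj(1 − u·Ã) equals d − 1. -/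

import Mathlib

/-- A walk of length `d` from `i` to `j` in the directed graph with edge set `E`. -/
def HasWalk {V : Type*} (E : Set (V × V)) (d : ℕ) (i j : V) : Prop :=
  ∃ v : Fin (d + 1) → V, v 0 = i ∧ v (Fin.last d) = j ∧
    ∀ t : Fin d, (v t.castSucc, v t.succ) ∈ E

/-!
Write `M = 1 - u • Ã`. From `M * adj M = det M • 1` we get
`adj M = det M • 1 + u • Ã * adj M`, and `det M` has constant term `1`, so the coefficient of
`uᵏ` in `adj M` is `Ãᵏ` plus a combination of the lower powers `Ãᵐ`, `m < k`. An entry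
`(Ãᵐ) s j` vanishes unless there is a walk of length `m` from `s` to `j`; below the distance only
the leading power survives, and the coefficient of `u^(d-1)` in `(Ã^(S) * adj M) i j` is
`(Ã^(S) * Ã^(d-1)) i j`. This entry is a sum of monomials with positive coefficients, one for each
walk `i → s → ⋯ → j` of length `d` with `s ∈ S`: evaluating every variable at `1` counts these
walks, so it is nonzero iff one exists.
-/
open Polynomial Finset

section Walks

variable {V : Type*} {E : Set (V × V)} {m : ℕ} {i j s : V}

lemma hasWalk_zero_iff : HasWalk E 0 i j ↔ i = j := by
  constructor
  · rintro ⟨v, rfl, rfl, -⟩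
    rfl
  · rintro rfl
    exact ⟨fun _ => i, rfl, rfl, fun t => t.elim0⟩

lemma hasWalk_succ_iff : HasWalk E (m + 1) i j ↔ ∃ s, (i, s) ∈ E ∧ HasWalk E m s j := by
  constructor
  · rintro ⟨v, rfl, rfl, hv⟩
    exact ⟨v 1, hv 0, fun t => v t.succ, rfl, rfl, fun t => hv t.succ⟩
  · rintro ⟨s, hs, v, rfl, rfl, hv⟩
    refine ⟨Fin.cons i v, rfl, rfl, Fin.cases hs fun t => ?_⟩
    simpa [← Fin.succ_castSucc] using hv t

noncomputable def walkDist (E : Set (V × V)) (i j : V) : ℕ := sInf {d | HasWalk E d i j}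

lemma walkDist_le (h : HasWalk E m i j) : walkDist E i j ≤ m := Nat.sInf_le h

lemma hasWalk_walkDist (h : ∃ m, HasWalk E m i j) : HasWalk E (walkDist E i j) i j :=
  Nat.sInf_mem h

lemma hasWalk_walkDist_of_pos (h : 0 < walkDist E i j) : HasWalk E (walkDist E i j) i j :=
  hasWalk_walkDist (Nat.nonempty_of_pos_sInf h)

lemma walkDist_le_succ (hs : (i, s) ∈ E) (h : HasWalk E m s j) : walkDist E i j ≤ m + 1 :=
  walkDist_le (hasWalk_succ_iff.2 ⟨s, hs, h⟩)

lemma hasWalk_walkDist_pred_iff (hs : (i, s) ∈ E) :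
    HasWalk E (walkDist E i j - 1) s j ↔
      (∃ m, HasWalk E m s j) ∧ walkDist E s j = walkDist E i j - 1 := by
  constructor
  · intro h
    have := walkDist_le_succ hs (hasWalk_walkDist ⟨_, h⟩)
    exact ⟨⟨_, h⟩, by have := walkDist_le h; omega⟩
  · rintro ⟨hreach, hdist⟩
    exact hdist ▸ hasWalk_walkDist hreach

end Walks

section Adjugate

variable {n R : Type*} [Fintype n] [CommRing R]

lemma Matrix.map_coeff_map_C_mul (P : Matrix n n R) (Q : Matrix n n R[X]) (k : ℕ) :
    (P.map C * Q).map (coeff · k) = P * Q.map (coeff · k) := by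
  ext i j
  simp [Matrix.mul_apply, finsetSum_coeff, coeff_C_mul]

variable [DecidableEq n] (N : Matrix n n R)

lemma Matrix.adjugate_one_sub_X_smul_eq :
    (1 - (X : R[X]) • N.map C).adjugate =
      N.charpolyRev • 1 + (X : R[X]) • (N.map C * (1 - (X : R[X]) • N.map C).adjugate) := by
  have h := Matrix.mul_adjugate (1 - (X : R[X]) • N.map C)
  rw [Matrix.sub_mul, Matrix.one_mul, Matrix.smul_mul, sub_eq_iff_eq_add] at h
  exact h

lemma Matrix.map_coeff_adjugate_one_sub_X_smul (k : ℕ) :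
    (1 - (X : R[X]) • N.map C).adjugate.map (coeff · k) =
      ∑ m ∈ range (k + 1), N.charpolyRev.coeff (k - m) • N ^ m := by
  have hadj := N.adjugate_one_sub_X_smul_eq
  set Q := (1 - (X : R[X]) • N.map C).adjugate
  have hQ (k : ℕ) : Q.map (coeff · k) =
      N.charpolyRev.coeff k • 1 + ((X : R[X]) • (N.map C * Q)).map (coeff · k) := by
    conv_lhs => rw [hadj]
    ext i j
    by_cases hij : i = j <;> simp [hij]
  induction k with
  | zero =>
    rw [hQ 0]
    ext i j
    simp [Matrix.smul_apply]
  | succ k ih =>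
    have hX : ((X : R[X]) • (N.map C * Q)).map (coeff · (k + 1)) = N * Q.map (coeff · k) := by
      rw [← Matrix.map_coeff_map_C_mul]
      ext i j
      simp [Matrix.smul_apply, coeff_X_mul]
    rw [hQ, hX, ih, sum_range_succ' _ (k + 1), Matrix.mul_sum, add_comm]
    simp [pow_succ']

lemma Matrix.coeff_adjugate_one_sub_X_smul_apply {k : ℕ} {s j : n}
    (h : ∀ m < k, (N ^ m) s j = 0) :
    ((1 - (X : R[X]) • N.map C).adjugate s j).coeff k = (N ^ k) s j := by
  have := congrFun (congrFun (N.map_coeff_adjugate_one_sub_X_smul k) s) j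
  rw [Matrix.map_apply, sum_range_succ, Matrix.add_apply, Matrix.sum_apply,
    sum_eq_zero fun m hm => by rw [Matrix.smul_apply, h m (mem_range.1 hm), smul_zero]] at this
  rw [this, Nat.sub_self, coeff_zero_eq_eval_zero, eval_charpolyRev, Matrix.smul_apply, one_smul,
    zero_add]

lemma Matrix.coeff_map_C_mul_adjugate_one_sub_X_smul_apply (P : Matrix n n R) {k : ℕ} {i j : n}
    (h : ∀ s, P i s ≠ 0 → ∀ m < k, (N ^ m) s j = 0) :
    ((P.map C * (1 - (X : R[X]) • N.map C).adjugate) i j).coeff k = (P * N ^ k) i j := by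
  have := congrFun (congrFun (P.map_coeff_map_C_mul (1 - (X : R[X]) • N.map C).adjugate k) i) j
  rw [Matrix.map_apply] at this
  rw [this, Matrix.mul_apply, Matrix.mul_apply]
  refine sum_congr rfl fun s _ => ?_
  by_cases hs : P i s = 0
  · simp [hs]
  · rw [Matrix.map_apply, N.coeff_adjugate_one_sub_X_smul_apply (h s hs)]

end Adjugate

lemma Matrix.mul_apply_pos {n R : Type*} [Fintype n] [Semiring R] [PartialOrder R]
    [IsStrictOrderedRing R] {P Q : Matrix n n R} (hP : ∀ a b, 0 ≤ P a b)
    (hQ : ∀ a b, 0 ≤ Q a b) {i s j : n} (his : 0 < P i s) (hsj : 0 < Q s j) : 0 < (P * Q) i j :=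
  sum_pos' (fun t _ => mul_nonneg (hP i t) (hQ t j)) ⟨s, mem_univ s, mul_pos his hsj⟩

section WalkSupport

variable {V R : Type*} [Fintype V] [DecidableEq V] {E : Set (V × V)}

lemma pow_apply_eq_zero_of_not_hasWalk [Semiring R] {B : Matrix V V R}
    (hB : ∀ a b, (a, b) ∉ E → B a b = 0) {m : ℕ} {i j : V} (h : ¬ HasWalk E m i j) :
    (B ^ m) i j = 0 := by
  induction m generalizing i with
  | zero => exact Matrix.one_apply_ne fun hij => h (hasWalk_zero_iff.2 hij)
  | succ m ih =>
    rw [pow_succ', Matrix.mul_apply]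
    refine sum_eq_zero fun s _ => ?_
    by_cases hs : (i, s) ∈ E
    · rw [ih fun hw => h (hasWalk_succ_iff.2 ⟨s, hs, hw⟩), mul_zero]
    · rw [hB i s hs, zero_mul]

variable [Semiring R] [PartialOrder R] [IsStrictOrderedRing R] {B : Matrix V V R}

lemma pow_apply_pos_of_hasWalk (hB : ∀ a b, 0 ≤ B a b) (hE : ∀ a b, (a, b) ∈ E → 0 < B a b)
    {m : ℕ} {i j : V} (h : HasWalk E m i j) : 0 < (B ^ m) i j := by
  induction m generalizing i with
  | zero => simp [hasWalk_zero_iff.1 h]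
  | succ m ih =>
    obtain ⟨s, hs, hw⟩ := hasWalk_succ_iff.1 h
    rw [pow_succ']
    exact Matrix.mul_apply_pos hB (Matrix.pow_apply_nonneg hB m) (hE i s hs) (ih hw)

end WalkSupport

section SymbolicAdjacency

variable {V : Type*} [Fintype V] [DecidableEq V]
  {E : Set (V × V)} [DecidablePred fun p => p ∈ E]
  {A : Matrix V V (MvPolynomial (V × V) ℤ)}
  {S : Set V} [DecidablePred fun s => s ∈ S] {AS : Matrix V V (MvPolynomial (V × V) ℤ)}

lemma symbolic_adjacency_mul_pow_apply_ne_zero_iff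
    (hA : ∀ i j, A i j = if (i, j) ∈ E then MvPolynomial.X (i, j) else 0)
    (hAS : ∀ i s, AS i s = if s ∈ S then A i s else 0) (m : ℕ) (i j : V) :
    (AS * A ^ m) i j ≠ 0 ↔ ∃ s ∈ S, (i, s) ∈ E ∧ HasWalk E m s j := by
  constructor
  · intro h
    obtain ⟨s, -, hs⟩ := exists_ne_zero_of_sum_ne_zero h
    have hedge : s ∈ S ∧ (i, s) ∈ E := by
      by_contra hne
      refine left_ne_zero_of_mul hs ?_
      by_cases hsS : s ∈ S <;> simp_all
    refine ⟨s, hedge.1, hedge.2, by_contra fun hw => right_ne_zero_of_mul hs ?_⟩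
    exact pow_apply_eq_zero_of_not_hasWalk (fun a b hab => by simp [hA, hab]) hw
  · rintro ⟨s, hsS, hs, hw⟩ hzero
    set evalOne := (MvPolynomial.eval fun _ : V × V => (1 : ℤ)).mapMatrix (m := V)
    have hB (a b : V) : evalOne A a b = if (a, b) ∈ E then 1 else 0 := by
      simp [evalOne, hA, apply_ite]
    have hBS (a b : V) : evalOne AS a b = if b ∈ S ∧ (a, b) ∈ E then 1 else 0 := by
      by_cases hb : b ∈ S <;> simp [evalOne, hAS, hA, hb, apply_ite]
    have hB0 (a b : V) : 0 ≤ evalOne A a b := by rw [hB]; split_ifs <;> norm_num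
    have hBS0 (a b : V) : 0 ≤ evalOne AS a b := by rw [hBS]; split_ifs <;> norm_num
    have hpos : 0 < (evalOne AS * evalOne A ^ m) i j :=
      Matrix.mul_apply_pos hBS0 (Matrix.pow_apply_nonneg hB0 m) (by simp [hBS, hsS, hs])
        (pow_apply_pos_of_hasWalk hB0 (fun a b hab => by simp [hB, hab]) hw)
    rw [← map_pow, ← map_mul, RingHom.mapMatrix_apply, Matrix.map_apply, hzero,
      map_zero] at hpos
    exact lt_irrefl 0 hpos

lemma symbolic_adjacency_pow_apply_ne_zero_iff
    (hA : ∀ i j, A i j = if (i, j) ∈ E then MvPolynomial.X (i, j) else 0) (m : ℕ) (i j : V) :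
    (A ^ m) i j ≠ 0 ↔ HasWalk E m i j := by
  cases m with
  | zero => by_cases hij : i = j <;> simp [hij, hasWalk_zero_iff]
  | succ m =>
    rw [pow_succ', symbolic_adjacency_mul_pow_apply_ne_zero_iff hA (S := Set.univ)
      (fun _ _ => (if_pos trivial).symm), hasWalk_succ_iff]
    simp

lemma coeff_map_C_mul_adjugate_apply_of_lt_walkDist
    (hA : ∀ i j, A i j = if (i, j) ∈ E then MvPolynomial.X (i, j) else 0)
    {P : Matrix V V (MvPolynomial (V × V) ℤ)} {i j : V} (hP : ∀ s, P i s ≠ 0 → (i, s) ∈ E)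
    {k : ℕ} (hk : k < walkDist E i j) :
    ((P.map C * (1 - (X : (MvPolynomial (V × V) ℤ)[X]) • A.map C).adjugate) i j).coeff k =
      (P * A ^ k) i j := by
  refine A.coeff_map_C_mul_adjugate_one_sub_X_smul_apply P fun s hs m hm => ?_
  refine pow_apply_eq_zero_of_not_hasWalk (E := E) (fun a b hab => by simp [hA, hab]) fun hw => ?_
  have := walkDist_le_succ (hP s hs) hw
  omega

end SymbolicAdjacency

lemma Polynomial.trailingDegree_eq_of_coeff_ne_zero {R : Type*} [Semiring R] {p : R[X]} {n : ℕ}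
    (hn : p.coeff n ≠ 0) (hlt : ∀ m < n, p.coeff m = 0) : p.trailingDegree = n := by
  have hp : p ≠ 0 := fun h => hn (by rw [h, coeff_zero])
  rw [trailingDegree_eq_natTrailingDegree hp,
    le_antisymm (natTrailingDegree_le_of_ne_zero hn) (le_natTrailingDegree hp hlt)]

theorem stmt3_general {V : Type*} [Fintype V] [DecidableEq V]
    (E : Set (V × V)) [DecidablePred fun p => p ∈ E]
    (S : Set V) [DecidablePred fun s => s ∈ S]
    (A AS : Matrix V V (MvPolynomial (V × V) ℤ))
    (hA : ∀ i j, A i j = if (i, j) ∈ E then MvPolynomial.X (i, j) else 0)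
    (hAS : ∀ i s, AS i s = if s ∈ S then A i s else 0)
    (M : Matrix V V (Polynomial (MvPolynomial (V × V) ℤ)))
    (hM : M = 1 - Matrix.of fun i j => Polynomial.X * Polynomial.C (A i j))
    (i j : V)
    (d : ℕ) (hd : d = sInf {d' : ℕ | HasWalk E d' i j}) (hd1 : 1 ≤ d) :
    (((AS.map Polynomial.C * M.adjugate) i j).coeff (d - 1) ≠ 0 ↔
      ∃ s ∈ S, (i, s) ∈ E ∧ (∃ d', HasWalk E d' s j) ∧
        sInf {d' : ℕ | HasWalk E d' s j} = d - 1) ∧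
    ((A.map Polynomial.C * M.adjugate) i j).trailingDegree = ((d - 1 : ℕ) : ℕ∞) := by
  replace hM : M = 1 - (X : (MvPolynomial (V × V) ℤ)[X]) • A.map C := by
    rw [hM]; ext; simp [Matrix.smul_apply]
  change d = walkDist E i j at hd
  subst hd
  have hA_edge (s : V) (hs : A i s ≠ 0) : (i, s) ∈ E := by
    by_contra h; simp_all
  have hAS_edge (s : V) (hs : AS i s ≠ 0) : (i, s) ∈ E := by
    by_contra h; simp_all
  have hcoeff {k : ℕ} (hk : k < walkDist E i j) :
      ((A.map C * M.adjugate) i j).coeff k = (A ^ (k + 1)) i j := by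
    rw [hM, coeff_map_C_mul_adjugate_apply_of_lt_walkDist hA hA_edge hk, pow_succ']
  refine ⟨?_, trailingDegree_eq_of_coeff_ne_zero ?_ fun k hk => ?_⟩
  · rw [hM, coeff_map_C_mul_adjugate_apply_of_lt_walkDist hA hAS_edge (by omega),
      symbolic_adjacency_mul_pow_apply_ne_zero_iff hA hAS]
    exact exists_congr fun s => and_congr_right fun _ => and_congr_right hasWalk_walkDist_pred_iff
  · rw [hcoeff (by omega), symbolic_adjacency_pow_apply_ne_zero_iff hA, Nat.sub_add_cancel hd1]
    exact hasWalk_walkDist_of_pos hd1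
  · rw [hcoeff (by omega)]
    by_contra hne
    have := walkDist_le ((symbolic_adjacency_pow_apply_ne_zero_iff hA _ i j).1 hne)
    omega

/-- Successor-witness characterization: with `Ã^{(S)}` denoting the symbolic adjacency matrix
with all columns outside `S` zeroed, and `d = dist_G(i,j) ≥ 1`, the coefficient of `u^{d-1}`
in the `(i,j)` entry of `Ã^{(S)} * adj(1 - u • Ã)` is nonzero iff `S` contains a successor of
`i` on a shortest path to `j`; in particular for `S = V` the trailing degree of the `(i,j)`
entry of `Ã * adj(1 - u • Ã)` equals `d - 1`. -/
theorem stmt3 {V : Type*} [Fintype V] [DecidableEq V] [Nonempty V]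
    (E : Set (V × V)) [DecidablePred fun p => p ∈ E]
    (S : Set V) [DecidablePred fun s => s ∈ S]
    (A AS : Matrix V V (MvPolynomial (V × V) ℤ))
    (hA : ∀ i j, A i j = if (i, j) ∈ E then MvPolynomial.X (i, j) else 0)
    (hAS : ∀ i s, AS i s = if s ∈ S then A i s else 0)
    (M : Matrix V V (Polynomial (MvPolynomial (V × V) ℤ)))
    (hM : M = 1 - Matrix.of fun i j => Polynomial.X * Polynomial.C (A i j))
    (i j : V) (hreach : ∃ d, HasWalk E d i j)
    (d : ℕ) (hd : d = sInf {d' : ℕ | HasWalk E d' i j}) (hd1 : 1 ≤ d) :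
    (((AS.map Polynomial.C * M.adjugate) i j).coeff (d - 1) ≠ 0 ↔
      ∃ s ∈ S, (i, s) ∈ E ∧ (∃ d', HasWalk E d' s j) ∧
        sInf {d' : ℕ | HasWalk E d' s j} = d - 1) ∧
    ((A.map Polynomial.C * M.adjugate) i j).trailingDegree = ((d - 1 : ℕ) : ℕ∞) :=
  stmt3_general E S A AS hA hAS M hM i j d hd hd1
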